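/- Let T be a tree rooted at r and Z a set of vertices with α(T) > α(T - Z) and r α-critical in T. Then either (i) there exist two (possibly equal) vertices u, v ∈ Z ∩ V(T) such that α(T) > α(T - {u,v}) and r remains α-critical in T - {u,v}, or (ii) there exists a vertex u ∈ Z ∩ V(T) such that α(T) > α(T - u) and r is not α-critical in T - u. -/

import Mathlib

open SimpleGraph

/-- The maximum size of an independent set of `G` contained in the vertex set `A`
(i.e. the independence number of the induced subgraph `G[A]`). -/
noncomputable def alphaOn {V : Type*} [Fintype V] (G : SimpleGraph V) (A : Set V) : ℕ :=
  sSup {n | ∃ s : Finset V, ↑s ⊆ A ∧ (↑s : Set V).Pairwise (fun a b => ¬ G.Adj a b) ∧ s.card = n}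

/-- The open neighborhood of a set of vertices. -/
def nbhd {V : Type*} (G : SimpleGraph V) (S : Set V) : Set V :=
  {v | v ∉ S ∧ ∃ u ∈ S, G.Adj u v}

/-- `v` is α-critical in the induced subgraph `G[A]`. -/
def critOn {V : Type*} [Fintype V] (G : SimpleGraph V) (A : Set V) (v : V) : Prop :=
  alphaOn G A = 1 + alphaOn G (A \ {v})

/-- For a tree `T` rooted at `r`, the vertex set of the subtree rooted at `a`:
those vertices reachable from `a` without passing through `r`. -/
def descend {V : Type*} (T : SimpleGraph V) (r a : V) : Set V :=
  {v | ∃ p : T.Walk a v, r ∉ p.support}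

/-- The connected component of `v₀` in `G - X`: vertices reachable from `v₀` avoiding `X`. -/
def avoidComp {V : Type*} (G : SimpleGraph V) (X : Set V) (v₀ : V) : Set V :=
  {v | ∃ p : G.Walk v₀ v, ∀ x ∈ p.support, x ∉ X}

/-!
Together with an unrooted companion statement (if `Z` meets every maximum independent set
but no single vertex of `Z` does, then two vertices of `Z` do), the statement is proved for every
induced subforest `G[A]` by induction on `|A|`.

If `r ∈ Z`, or a single vertex of `Z` already lowers `α`, we are done. Otherwise criticality of
`r` gives `α(A) = 1 + α(B)` for `B = A - N[r]`, and the drop caused by `Z` survives in some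
component `E` of `G[B]`. By acyclicity at most one neighbour `x` of `r` is adjacent to `E`, and
only at one vertex `y`. If there is no such `x`, `E` is a separate summand of `G[A]`, and the
pair given by the companion statement for `E` works. Otherwise let `R = A - E - x`:
either `α(R - N(x)) ≤ α(R) - 2` and again any such pair works, or `y` is critical in `E` and
the statement for `(E, y)` yields a pair keeping `y`, hence `r`, critical.

The companion statement follows from the rooted one at a critical vertex; in a forest without
critical vertices it is reduced, at a leaf `ℓ` with neighbour `w`, to the rooted statement for
`(E - ℓ, w)` if `ℓ ∈ Z`, and to the companion statement for `E - {ℓ, w}` otherwise.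
-/

namespace SimpleGraph

variable {V : Type*} (G : SimpleGraph V)

def IsIndepIn (A : Set V) (s : Finset V) : Prop :=
  ↑s ⊆ A ∧ G.IsIndepSet ↑s

def Separated (B C : Set V) : Prop :=
  ∀ b ∈ B, ∀ c ∈ C, ¬G.Adj b c

/-- The vertex set of the connected component of `w` in `G[S]` (empty when `w ∉ S`). -/
def componentIn (S : Set V) (w : V) : Set V :=
  {v | ∃ p : G.Walk w v, ∀ x ∈ p.support, x ∈ S}

variable {G}

theorem IsIndepIn.mono {A B : Set V} {s : Finset V} (hs : G.IsIndepIn A s) (h : A ⊆ B) :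
    G.IsIndepIn B s :=
  ⟨hs.1.trans h, hs.2⟩

theorem IsIndepIn.subset {A : Set V} {s t : Finset V} (hs : G.IsIndepIn A s) (h : t ⊆ s) :
    G.IsIndepIn A t :=
  ⟨(Finset.coe_subset.2 h).trans hs.1, hs.2.mono (Finset.coe_subset.2 h)⟩

theorem Separated.mono {B C B' C' : Set V} (h : G.Separated B C) (hB : B' ⊆ B) (hC : C' ⊆ C) :
    G.Separated B' C' :=
  fun b hb c hc => h b (hB hb) c (hC hc)

theorem componentIn_subset {S : Set V} {w : V} : G.componentIn S w ⊆ S :=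
  fun _ ⟨p, hp⟩ => hp _ p.end_mem_support

theorem mem_componentIn_self {S : Set V} {w : V} (hw : w ∈ S) : w ∈ G.componentIn S w :=
  ⟨.nil, by simpa using hw⟩

theorem mem_componentIn_of_walk {S : Set V} {w x y : V} (hx : x ∈ G.componentIn S w)
    (p : G.Walk x y) (hp : ∀ z ∈ p.support, z ∈ S) : y ∈ G.componentIn S w := by
  obtain ⟨q, hq⟩ := hx
  refine ⟨q.append p, fun z hz => ?_⟩
  rw [Walk.mem_support_append_iff] at hz
  exact hz.elim (hq z) (hp z)

theorem componentIn_separated (S : Set V) (w : V) :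
    G.Separated (G.componentIn S w) (S \ G.componentIn S w) := fun _ hb _ hc hadj =>
  hc.2 <| mem_componentIn_of_walk hb (hadj.toWalk) (by simp [componentIn_subset hb, hc.1])

theorem exists_walk_of_mem_componentIn {S : Set V} {w u v : V} (hu : u ∈ G.componentIn S w)
    (hv : v ∈ G.componentIn S w) : ∃ p : G.Walk u v, ∀ x ∈ p.support, x ∈ S := by
  obtain ⟨p, hp⟩ := hu
  obtain ⟨q, hq⟩ := hv
  refine ⟨p.reverse.append q, fun x hx => ?_⟩
  rw [Walk.mem_support_append_iff, Walk.support_reverse, List.mem_reverse] at hx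
  exact hx.elim (hp x) (hq x)

theorem componentIn_sdiff_componentIn {S : Set V} {w₀ w : V} (hw : w ∉ G.componentIn S w₀) :
    G.componentIn (S \ G.componentIn S w₀) w = G.componentIn S w := by
  refine subset_antisymm (fun v ⟨p, hp⟩ => ⟨p, fun x hx => (hp x hx).1⟩) ?_
  classical
  rintro v ⟨p, hp⟩
  refine ⟨p, fun x hx => ⟨hp x hx, fun hx₀ => hw ?_⟩⟩
  exact mem_componentIn_of_walk hx₀ (p.takeUntil x hx).reverse
    (by simpa using fun z hz => hp z (p.support_takeUntil_subset_support hx hz))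

theorem adj_of_adj_componentIn_sdiff_closedNbhd {A : Set V} {r w e c : V}
    (he : e ∈ G.componentIn (A \ insert r (G.neighborSet r)) w) (hc : c ∈ A)
    (hcE : c ∉ G.componentIn (A \ insert r (G.neighborSet r)) w) (hec : G.Adj e c) :
    G.Adj r c := by
  by_contra hrc
  have hcr : c ≠ r := by
    rintro rfl
    exact (componentIn_subset he).2 (.inr hec.symm)
  exact componentIn_separated _ w e he c
    ⟨⟨hc, by rintro (h | h) <;> contradiction⟩, hcE⟩ hec

theorem IsAcyclic.eq_of_adj_of_walk (hG : G.IsAcyclic) {v a b : V} (ha : G.Adj v a)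
    (hb : G.Adj v b) (p : G.Walk a b) (hv : v ∉ p.support) : a = b := by
  classical
  have hv' : v ∉ p.bypass.support := fun h => hv (p.support_bypass_subset_support h)
  have := hG.eq_snd_of_adj_start (p.bypass_isPath.cons hv' (h := ha)) hb (by simp)
  simpa using this.symm

theorem IsAcyclic.eq_of_adj_of_mem_componentIn (hG : G.IsAcyclic) {S : Set V} {w x e y : V}
    (hx : x ∉ S) (he : e ∈ G.componentIn S w) (hy : y ∈ G.componentIn S w) (hxe : G.Adj x e)
    (hxy : G.Adj x y) : e = y := by
  obtain ⟨p, hp⟩ := exists_walk_of_mem_componentIn he hy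
  exact hG.eq_of_adj_of_walk hxe hxy p fun h => hx (hp x h)

theorem IsAcyclic.eq_of_adj_of_adj_mem_componentIn (hG : G.IsAcyclic) {S : Set V}
    {w r x x' y e : V} (hr : r ∉ S) (hy : y ∈ G.componentIn S w) (he : e ∈ G.componentIn S w)
    (hrx : G.Adj r x) (hrx' : G.Adj r x') (hxy : G.Adj x y) (hx'e : G.Adj x' e) : x' = x := by
  obtain ⟨p, hp⟩ := exists_walk_of_mem_componentIn he hy
  refine hG.eq_of_adj_of_walk hrx' hrx (.cons hx'e (p.concat hxy.symm)) ?_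
  simp only [Walk.support_cons, Walk.support_concat, List.mem_cons, List.mem_append, not_or]
  exact ⟨hrx'.ne, fun h => hr (hp r h), hrx.ne, List.not_mem_nil⟩

theorem IsAcyclic.exists_leaf [Finite V] (hG : G.IsAcyclic) {S : Set V} (hne : S.Nonempty)
    (hS : ∀ v ∈ S, ∃ u ∈ S, G.Adj v u) :
    ∃ ℓ ∈ S, ∃ w ∈ S, G.Adj ℓ w ∧ ∀ u ∈ S, G.Adj ℓ u → u = w := by
  have := hne.to_subtype
  obtain ⟨a, ℓ, p, hp, hmax⟩ := Walk.exists_isPath_forall_isPath_length_le_length (G.induce S)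
  obtain ⟨u, hu, hℓu⟩ := hS ℓ ℓ.2
  have hℓu' : (G.induce S).Adj ℓ ⟨u, hu⟩ := hℓu
  have hnil : ¬p.Nil := fun hnil => by
    have := hmax _ _ _ (Walk.IsPath.nil.cons (by simpa using hℓu'.ne) (h := hℓu'))
    simp [hnil.length_eq_zero] at this
  refine ⟨ℓ, ℓ.2, p.penultimate, p.penultimate.2, (p.adj_penultimate hnil).symm,
    fun u hu hadj => ?_⟩
  have hadj' : (G.induce S).Adj ℓ ⟨u, hu⟩ := hadj
  by_cases hsupp : ⟨u, hu⟩ ∈ p.support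
  · exact congrArg Subtype.val ((hG.induce S).eq_penultimate_of_adj_end hp hadj' hsupp)
  · have := hmax _ _ _ (hp.concat hsupp hadj')
    simp at this

end SimpleGraph

theorem insert_union_sdiff_sdiff_singleton {α : Type*} {A E : Set α} {x : α} (hx : x ∈ A)
    (hE : E ⊆ A) : insert x (E ∪ (A \ E) \ {x}) = A := by
  ext z
  have := @hE z
  grind

section

variable {V : Type*} [Fintype V] {G : SimpleGraph V} {A B C D E R X Z : Set V}
  {r x y ℓ w : V}

theorem bddAbove_card_indepIn (G : SimpleGraph V) (A : Set V) :
    BddAbove {n | ∃ s : Finset V, ↑s ⊆ A ∧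
      (↑s : Set V).Pairwise (fun a b => ¬ G.Adj a b) ∧ s.card = n} :=
  ⟨Fintype.card V, by rintro _ ⟨s, -, -, rfl⟩; exact s.card_le_univ⟩

theorem SimpleGraph.IsIndepIn.card_le_alphaOn {s : Finset V} (hs : G.IsIndepIn A s) :
    s.card ≤ alphaOn G A :=
  le_csSup (bddAbove_card_indepIn G A) ⟨s, hs.1, hs.2, rfl⟩

theorem exists_isIndepIn_card_eq_alphaOn (G : SimpleGraph V) (A : Set V) :
    ∃ s, G.IsIndepIn A s ∧ s.card = alphaOn G A := by
  obtain ⟨s, hA, hs, hcard⟩ := Nat.sSup_mem (s := {n | ∃ s : Finset V, ↑s ⊆ A ∧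
    (↑s : Set V).Pairwise (fun a b => ¬ G.Adj a b) ∧ s.card = n}) ⟨0, ∅, by simp⟩
    (bddAbove_card_indepIn G A)
  exact ⟨s, ⟨hA, hs⟩, hcard⟩

theorem alphaOn_le_of_forall {m : ℕ} (h : ∀ s, G.IsIndepIn A s → s.card ≤ m) :
    alphaOn G A ≤ m := by
  obtain ⟨s, hs, hcard⟩ := exists_isIndepIn_card_eq_alphaOn G A
  exact hcard ▸ h s hs

theorem alphaOn_mono (h : A ⊆ B) : alphaOn G A ≤ alphaOn G B :=
  alphaOn_le_of_forall fun _ hs => (hs.mono h).card_le_alphaOn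

theorem alphaOn_empty : alphaOn G ∅ = 0 :=
  Nat.eq_zero_of_le_zero <| alphaOn_le_of_forall fun s hs => by
    simp [Finset.coe_eq_empty.1 (Set.subset_empty_iff.1 hs.1)]

theorem nonempty_of_alphaOn_sdiff_lt {Z : Set V} (h : alphaOn G (A \ Z) < alphaOn G A) :
    A.Nonempty :=
  Set.nonempty_iff_ne_empty.2 fun hA => by simp [hA, alphaOn_empty] at h

theorem alphaOn_le_alphaOn_sdiff_singleton_add_one (A : Set V) (v : V) :
    alphaOn G A ≤ alphaOn G (A \ {v}) + 1 := by
  classical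
  obtain ⟨s, hs, hcard⟩ := exists_isIndepIn_card_eq_alphaOn G A
  have hsv : G.IsIndepIn (A \ {v}) (s.erase v) :=
    ⟨fun x hx => by
      simp only [Finset.coe_erase, Set.mem_sdiff] at hx
      exact ⟨hs.1 hx.1, hx.2⟩, (hs.subset (s.erase_subset v)).2⟩
  have := hsv.card_le_alphaOn
  have := Finset.pred_card_le_card_erase (s := s) (a := v)
  omega

theorem alphaOn_add_one_le_of_forall_not_adj (hx : x ∈ A) (hB : B ⊆ A) (hxB : x ∉ B)
    (hadj : ∀ b ∈ B, ¬G.Adj x b) : alphaOn G B + 1 ≤ alphaOn G A := by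
  classical
  obtain ⟨s, hs, hcard⟩ := exists_isIndepIn_card_eq_alphaOn G B
  have hxs : x ∉ s := fun h => hxB (hs.1 h)
  have hins : G.IsIndepIn A (insert x s) := by
    refine ⟨by simpa using Set.insert_subset hx (hs.1.trans hB), ?_⟩
    rw [Finset.coe_insert]
    exact hs.2.insert fun b hb _ => ⟨hadj b (hs.1 hb), fun h => hadj b (hs.1 hb) h.symm⟩
  calc alphaOn G B + 1 = (insert x s).card := by rw [Finset.card_insert_of_notMem hxs, hcard]
    _ ≤ alphaOn G A := hins.card_le_alphaOn

theorem alphaOn_le_max_closedNbhd (A : Set V) (x : V) :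
    alphaOn G A ≤
      max (alphaOn G (A \ {x})) (alphaOn G (A \ insert x (G.neighborSet x)) + 1) := by
  classical
  obtain ⟨s, hs, hcard⟩ := exists_isIndepIn_card_eq_alphaOn G A
  rw [← hcard]
  by_cases hxs : x ∈ s
  · refine le_max_of_le_right ?_
    have hsx : G.IsIndepIn (A \ insert x (G.neighborSet x)) (s.erase x) := by
      refine ⟨fun y hy => ?_, (hs.subset (s.erase_subset x)).2⟩
      simp only [Finset.coe_erase, Set.mem_sdiff, Set.mem_singleton_iff] at hy
      refine ⟨hs.1 hy.1, ?_⟩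
      rintro (rfl | hxy)
      · exact hy.2 rfl
      · exact hs.2 hxs hy.1 (Ne.symm hy.2) hxy
    rw [← Finset.card_erase_add_one hxs]
    exact Nat.add_le_add_right hsx.card_le_alphaOn 1
  · refine le_max_of_le_left (IsIndepIn.card_le_alphaOn ⟨fun y hy => ⟨hs.1 hy, ?_⟩, hs.2⟩)
    rintro rfl
    exact hxs hy

theorem alphaOn_le_alphaOn_sdiff_pair_add_one {a b : V} (h : G.Adj a b) (A : Set V) :
    alphaOn G A ≤ alphaOn G (A \ {a, b}) + 1 := by
  have h₁ := alphaOn_le_max_closedNbhd (G := G) A a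
  have h₂ := alphaOn_le_alphaOn_sdiff_singleton_add_one (G := G) (A \ {a}) b
  have h₃ : alphaOn G (A \ insert a (G.neighborSet a)) ≤ alphaOn G (A \ {a, b}) :=
    alphaOn_mono (Set.sdiff_subset_sdiff_right (Set.insert_subset_insert (by simpa using h)))
  rw [Set.sdiff_sdiff, Set.union_singleton, Set.pair_comm] at h₂
  omega

theorem alphaOn_union_le (B C : Set V) : alphaOn G (B ∪ C) ≤ alphaOn G B + alphaOn G C := by
  classical
  refine alphaOn_le_of_forall fun s hs => ?_
  have hB : G.IsIndepIn B (s.filter (· ∈ B)) :=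
    ⟨fun x hx => by simpa using (Finset.mem_filter.1 hx).2, (hs.subset (s.filter_subset _)).2⟩
  have hC : G.IsIndepIn C (s.filter (· ∉ B)) := by
    refine ⟨fun x hx => ?_, (hs.subset (s.filter_subset _)).2⟩
    obtain ⟨hxs, hxB⟩ := Finset.mem_filter.1 hx
    exact (hs.1 hxs).resolve_left hxB
  rw [← Finset.card_filter_add_card_filter_not (p := (· ∈ B))]
  exact Nat.add_le_add hB.card_le_alphaOn hC.card_le_alphaOn

theorem alphaOn_union_of_separated (hd : Disjoint B C) (hs : G.Separated B C) :
    alphaOn G (B ∪ C) = alphaOn G B + alphaOn G C := by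
  classical
  refine le_antisymm (alphaOn_union_le B C) ?_
  obtain ⟨s, hsB, hs_card⟩ := exists_isIndepIn_card_eq_alphaOn G B
  obtain ⟨t, htC, ht_card⟩ := exists_isIndepIn_card_eq_alphaOn G C
  have hst : Disjoint s t := Finset.disjoint_left.2 fun x hxs hxt =>
    Set.disjoint_left.1 hd (hsB.1 hxs) (htC.1 hxt)
  have hind : G.IsIndepIn (B ∪ C) (s ∪ t) := by
    refine ⟨by simpa using Set.union_subset_union hsB.1 htC.1, ?_⟩
    rw [Finset.coe_union]
    exact Set.pairwise_union.2 ⟨hsB.2, htC.2, fun a ha b hb _ =>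
      ⟨hs a (hsB.1 ha) b (htC.1 hb), fun h => hs a (hsB.1 ha) b (htC.1 hb) h.symm⟩⟩
  rw [← hs_card, ← ht_card, ← Finset.card_union_of_disjoint hst]
  exact hind.card_le_alphaOn

theorem critOn_iff_lt : critOn G A r ↔ alphaOn G (A \ {r}) < alphaOn G A := by
  have := alphaOn_le_alphaOn_sdiff_singleton_add_one (G := G) A r
  unfold critOn
  omega

theorem critOn.mem (hc : critOn G A r) : r ∈ A := by
  by_contra h
  rw [critOn_iff_lt, Set.sdiff_singleton_eq_self h] at hc
  exact lt_irrefl _ hc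

theorem not_critOn_sdiff_singleton : ¬critOn G (A \ {r}) r :=
  fun hc => hc.mem.2 rfl

theorem critOn.mem_of_isIndepIn (hc : critOn G A r) {s : Finset V} (hs : G.IsIndepIn A s)
    (hcard : s.card = alphaOn G A) : r ∈ s := by
  by_contra hrs
  have hsr : G.IsIndepIn (A \ {r}) s :=
    ⟨fun x hx => ⟨hs.1 hx, by rintro rfl; exact hrs hx⟩, hs.2⟩
  exact (critOn_iff_lt.1 hc).not_ge (hcard ▸ hsr.card_le_alphaOn)

theorem critOn.alphaOn_sdiff_closedNbhd_add_one (hc : critOn G A r) :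
    alphaOn G (A \ insert r (G.neighborSet r)) + 1 = alphaOn G A := by
  have h₁ := alphaOn_le_max_closedNbhd (G := G) A r
  have h₂ : alphaOn G (A \ insert r (G.neighborSet r)) + 1 ≤ alphaOn G A :=
    alphaOn_add_one_le_of_forall_not_adj hc.mem Set.sdiff_subset
      (fun h => h.2 (Set.mem_insert r _)) fun b hb hadj => hb.2 (Set.mem_insert_of_mem _ hadj)
  have h₃ := critOn_iff_lt.1 hc
  omega

theorem critOn.alphaOn_sdiff_singleton_of_adj (hc : critOn G A r) (h : G.Adj r x) :
    alphaOn G (A \ {x}) = alphaOn G A := by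
  obtain ⟨s, hs, hcard⟩ := exists_isIndepIn_card_eq_alphaOn G A
  have hrs := hc.mem_of_isIndepIn hs hcard
  refine le_antisymm (alphaOn_mono Set.sdiff_subset)
    (hcard ▸ IsIndepIn.card_le_alphaOn ⟨fun y hy => ⟨hs.1 hy, ?_⟩, hs.2⟩)
  rintro rfl
  exact hs.2 hrs hy h.ne h

theorem alphaOn_sdiff_eq_left_of_separated (hd : Disjoint B C) (hs : G.Separated B C)
    (h : alphaOn G ((B ∪ C) \ D) = alphaOn G (B ∪ C)) : alphaOn G (B \ D) = alphaOn G B := by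
  have h₁ := alphaOn_union_le (G := G) (B \ D) (C \ D)
  have h₂ := alphaOn_mono (G := G) (Set.sdiff_subset : B \ D ⊆ B)
  have h₃ := alphaOn_mono (G := G) (Set.sdiff_subset : C \ D ⊆ C)
  rw [Set.union_sdiff_distrib, alphaOn_union_of_separated hd hs] at h
  omega

theorem alphaOn_sdiff_lt_of_separated (hd : Disjoint B C) (hs : G.Separated B C)
    (h : alphaOn G ((B ∪ C) \ D) < alphaOn G (B ∪ C)) :
    alphaOn G (B \ D) < alphaOn G B ∨ alphaOn G (C \ D) < alphaOn G C := by
  rw [Set.union_sdiff_distrib, alphaOn_union_of_separated hd hs, alphaOn_union_of_separated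
    (hd.mono Set.sdiff_subset Set.sdiff_subset) (hs.mono Set.sdiff_subset Set.sdiff_subset)] at h
  omega

theorem critOn_union_iff_of_separated (hd : Disjoint B C) (hs : G.Separated B C) (hr : r ∉ B) :
    critOn G (B ∪ C) r ↔ critOn G C r := by
  have hBC : (B ∪ C) \ {r} = B ∪ (C \ {r}) := by
    rw [Set.union_sdiff_distrib, Set.sdiff_singleton_eq_self hr]
  unfold critOn
  rw [hBC, alphaOn_union_of_separated hd hs,
    alphaOn_union_of_separated (hd.mono_right Set.sdiff_subset) (hs.mono le_rfl Set.sdiff_subset)]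
  omega

theorem exists_componentIn_alphaOn_sdiff_lt (Z : Set V) {S : Set V}
    (h : alphaOn G (S \ Z) < alphaOn G S) :
    ∃ w ∈ S, alphaOn G (G.componentIn S w \ Z) < alphaOn G (G.componentIn S w) := by
  induction hn : S.ncard using Nat.strong_induction_on generalizing S with
  | _ n ih =>
  obtain ⟨w₀, hw₀⟩ := nonempty_of_alphaOn_sdiff_lt h
  rw [← Set.union_sdiff_cancel (componentIn_subset (G := G) (S := S) (w := w₀))] at h
  rcases alphaOn_sdiff_lt_of_separated Set.disjoint_sdiff_right (componentIn_separated S w₀) h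
    with hE | hF
  · exact ⟨w₀, hw₀, hE⟩
  · have hlt : (S \ G.componentIn S w₀).ncard < n := hn ▸ Set.ncard_lt_ncard
      (Set.sdiff_subset.ssubset_of_not_subset fun h => (h hw₀).2 (mem_componentIn_self hw₀))
    obtain ⟨w, hw, hwF⟩ := ih _ hlt hF rfl
    exact ⟨w, hw.1, by rwa [componentIn_sdiff_componentIn hw.2] at hwF⟩

/-- The theorem for the induced subgraph `G[A]`. -/
def RootedPairReduction (G : SimpleGraph V) (A : Set V) : Prop :=
  ∀ r Z, critOn G A r → alphaOn G (A \ Z) < alphaOn G A →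
    (∃ u ∈ Z, ∃ v ∈ Z, alphaOn G (A \ {u, v}) < alphaOn G A ∧ critOn G (A \ {u, v}) r) ∨
    (∃ u ∈ Z, alphaOn G (A \ {u}) < alphaOn G A ∧ ¬ critOn G (A \ {u}) r)

def PairReduction (G : SimpleGraph V) (A : Set V) : Prop :=
  ∀ Z, alphaOn G (A \ Z) < alphaOn G A → (∀ z ∈ Z, alphaOn G (A \ {z}) = alphaOn G A) →
    ∃ u ∈ Z, ∃ v ∈ Z, alphaOn G (A \ {u, v}) < alphaOn G A

theorem exists_adj_of_not_critOn {v : V} (hc : ¬critOn G E v) (hv : v ∈ E) :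
    ∃ u ∈ E, G.Adj v u := by
  by_contra! h
  have := alphaOn_add_one_le_of_forall_not_adj (G := G) (B := E \ {v}) hv Set.sdiff_subset
    (by simp) fun u hu => h u hu.1
  exact hc (critOn_iff_lt.2 (by omega))

theorem alphaOn_sdiff_singleton_eq_of_leaf (hℓw : G.Adj ℓ w)
    (hleaf : ∀ u ∈ X, G.Adj ℓ u → u = w) (hw : critOn G (X \ {ℓ}) w) :
    alphaOn G (X \ {ℓ}) = alphaOn G X := by
  have h₁ := alphaOn_le_max_closedNbhd (G := G) X ℓ
  have h₂ : alphaOn G (X \ insert ℓ (G.neighborSet ℓ)) ≤ alphaOn G ((X \ {ℓ}) \ {w}) := by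
    refine alphaOn_mono fun u hu => ⟨⟨hu.1, fun h => hu.2 (.inl h)⟩, ?_⟩
    rintro rfl
    exact hu.2 (.inr hℓw)
  have h₃ := alphaOn_mono (G := G) (Set.sdiff_subset : X \ {ℓ} ⊆ X)
  unfold critOn at hw
  omega

theorem exists_pair_of_leaf_mem (hℓ : ℓ ∈ E) (hℓZ : ℓ ∈ Z) (hℓw : G.Adj ℓ w)
    (hleaf : ∀ u ∈ E, G.Adj ℓ u → u = w) (hℓc : ¬critOn G E ℓ)
    (hR : RootedPairReduction G (E \ {ℓ})) (hZ : alphaOn G (E \ Z) < alphaOn G E) :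
    ∃ u ∈ Z, ∃ v ∈ Z, alphaOn G (E \ {u, v}) < alphaOn G E := by
  have hEℓ : alphaOn G (E \ {ℓ}) = alphaOn G E :=
    le_antisymm (alphaOn_mono Set.sdiff_subset) (not_lt.1 (mt critOn_iff_lt.2 hℓc))
  by_cases hz : ∃ z ∈ Z, alphaOn G ((E \ {ℓ}) \ {z}) < alphaOn G (E \ {ℓ})
  · obtain ⟨z, hz, hlt⟩ := hz
    refine ⟨ℓ, hℓZ, z, hz, ?_⟩
    rwa [Set.insert_eq, ← Set.sdiff_sdiff, ← hEℓ]
  push Not at hz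
  have hw : critOn G (E \ {ℓ}) w := by
    refine critOn_iff_lt.2 (hEℓ ▸ Nat.lt_of_succ_le ?_)
    refine alphaOn_add_one_le_of_forall_not_adj hℓ (Set.sdiff_subset.trans Set.sdiff_subset)
      (fun h => h.1.2 rfl) fun u hu hadj => hu.2 (hleaf u hu.1.1 hadj)
  have hZℓ : alphaOn G ((E \ {ℓ}) \ Z) < alphaOn G (E \ {ℓ}) :=
    hEℓ ▸ (alphaOn_mono (Set.sdiff_subset_sdiff_left Set.sdiff_subset)).trans_lt hZ
  rcases hR w Z hw hZℓ with ⟨u, hu, v, hv, hlt, hcrit⟩ | ⟨u, hu, hlt, -⟩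
  · refine ⟨u, hu, v, hv, ?_⟩
    rw [Set.sdiff_sdiff_comm] at hlt hcrit
    rw [← alphaOn_sdiff_singleton_eq_of_leaf hℓw (fun u hu => hleaf u hu.1) hcrit]
    omega
  · exact absurd hlt (not_lt.2 (hz u hu))

theorem exists_pair_of_leaf_not_mem (hℓ : ℓ ∈ E) (hℓZ : ℓ ∉ Z) (hℓw : G.Adj ℓ w)
    (hleaf : ∀ u ∈ E, G.Adj ℓ u → u = w) (hM : PairReduction G (E \ {ℓ, w}))
    (hZ : alphaOn G (E \ Z) < alphaOn G E) (hZ1 : ∀ z ∈ Z, alphaOn G (E \ {z}) = alphaOn G E) :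
    ∃ u ∈ Z, ∃ v ∈ Z, alphaOn G (E \ {u, v}) < alphaOn G E := by
  have hℓE' : ∀ {Y : Set V}, Y ⊆ E \ {ℓ, w} → ℓ ∉ Y := fun hY h => (hY h).2 (.inl rfl)
  have hleaf' : ∀ u ∈ E \ {ℓ, w}, ¬G.Adj ℓ u := fun u hu hadj =>
    hu.2 (.inr (hleaf u hu.1 hadj))
  have hE' : alphaOn G (E \ {ℓ, w}) + 1 = alphaOn G E :=
    le_antisymm (alphaOn_add_one_le_of_forall_not_adj hℓ Set.sdiff_subset (hℓE' le_rfl) hleaf')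
      (alphaOn_le_alphaOn_sdiff_pair_add_one hℓw E)
  have hZ' : alphaOn G ((E \ {ℓ, w}) \ Z) < alphaOn G (E \ {ℓ, w}) := by
    have := alphaOn_add_one_le_of_forall_not_adj (G := G) (A := E \ Z) ⟨hℓ, hℓZ⟩
      (Set.sdiff_subset_sdiff_left Set.sdiff_subset) (hℓE' Set.sdiff_subset)
      fun u hu => hleaf' u hu.1
    omega
  have hZ1' : ∀ z ∈ Z, alphaOn G ((E \ {ℓ, w}) \ {z}) = alphaOn G (E \ {ℓ, w}) := by
    intro z hz
    have := alphaOn_le_alphaOn_sdiff_pair_add_one hℓw (E \ {z})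
    rw [Set.sdiff_sdiff_comm, hZ1 z hz] at this
    exact le_antisymm (alphaOn_mono Set.sdiff_subset) (by omega)
  obtain ⟨u, hu, v, hv, hlt⟩ := hM Z hZ' hZ1'
  refine ⟨u, hu, v, hv, ?_⟩
  have := alphaOn_le_alphaOn_sdiff_pair_add_one hℓw (E \ {u, v})
  rw [Set.sdiff_sdiff_comm] at this
  omega

theorem pairReduction_of_lt (hG : G.IsAcyclic) (E : Set V) (hR : RootedPairReduction G E)
    (ih : ∀ E' : Set V, E'.ncard < E.ncard → RootedPairReduction G E' ∧ PairReduction G E') :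
    PairReduction G E := by
  intro Z hZ hZ1
  by_cases hcrit : ∃ w, critOn G E w
  · obtain ⟨w, hw⟩ := hcrit
    rcases hR w Z hw hZ with ⟨u, hu, v, hv, hlt, -⟩ | ⟨u, hu, hlt, -⟩
    · exact ⟨u, hu, v, hv, hlt⟩
    · exact absurd (hZ1 u hu) hlt.ne
  push Not at hcrit
  obtain ⟨ℓ, hℓ, w, -, hℓw, hleaf⟩ := hG.exists_leaf (nonempty_of_alphaOn_sdiff_lt hZ)
    fun v hv => exists_adj_of_not_critOn (hcrit v) hv
  have hsmaller : ∀ {Y : Set V}, Y ⊆ E \ {ℓ} → Y.ncard < E.ncard := fun hY =>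
    Set.ncard_lt_ncard ((hY.trans Set.sdiff_subset).ssubset_of_not_subset
      fun h => (hY (h hℓ)).2 rfl)
  by_cases hℓZ : ℓ ∈ Z
  · exact exists_pair_of_leaf_mem hℓ hℓZ hℓw hleaf (hcrit ℓ) (ih _ (hsmaller le_rfl)).1 hZ
  · exact exists_pair_of_leaf_not_mem hℓ hℓZ hℓw hleaf
      (ih _ (hsmaller (Set.sdiff_subset_sdiff_right (by simp)))).2 hZ hZ1

theorem mem_of_alphaOn_sdiff_pair_lt {u v : V} (h : alphaOn G (E \ {u, v}) < alphaOn G E)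
    (hv : alphaOn G (E \ {v}) = alphaOn G E) : u ∈ E := by
  by_contra hu
  rw [Set.insert_eq, ← Set.sdiff_sdiff, Set.sdiff_singleton_eq_self hu, hv] at h
  exact lt_irrefl _ h

theorem pair_subset_of_alphaOn_sdiff_pair_lt {u v : V} (h : alphaOn G (E \ {u, v}) < alphaOn G E)
    (hZ1 : ∀ z ∈ ({u, v} : Set V), alphaOn G (E \ {z}) = alphaOn G E) : {u, v} ⊆ E :=
  Set.insert_subset (mem_of_alphaOn_sdiff_pair_lt h (hZ1 v (by simp)))
    (Set.singleton_subset_iff.2 (mem_of_alphaOn_sdiff_pair_lt (Set.pair_comm u v ▸ h)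
      (hZ1 u (by simp))))

theorem critOn.alphaOn_sdiff_closedNbhd_sdiff_singleton {z : V} (hc : critOn G A r)
    (hz : alphaOn G (A \ {z}) = alphaOn G A) :
    alphaOn G ((A \ insert r (G.neighborSet r)) \ {z}) =
      alphaOn G (A \ insert r (G.neighborSet r)) := by
  have hcz : critOn G (A \ {z}) r := critOn_iff_lt.2 <| hz ▸
    (alphaOn_mono (Set.sdiff_subset_sdiff_left Set.sdiff_subset)).trans_lt (critOn_iff_lt.1 hc)
  have h₁ := hc.alphaOn_sdiff_closedNbhd_add_one
  have h₂ := hcz.alphaOn_sdiff_closedNbhd_add_one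
  rw [Set.sdiff_sdiff_comm] at h₂
  omega

theorem alphaOn_union_sdiff_lt_and_critOn (hd : Disjoint E R) (hs : G.Separated E R)
    (hr : r ∉ E) (hc : critOn G (E ∪ R) r) (hD : D ⊆ E)
    (hlt : alphaOn G (E \ D) < alphaOn G E) :
    alphaOn G ((E ∪ R) \ D) < alphaOn G (E ∪ R) ∧ critOn G ((E ∪ R) \ D) r := by
  have hd' : Disjoint (E \ D) R := hd.mono_left Set.sdiff_subset
  have hs' : G.Separated (E \ D) R := hs.mono Set.sdiff_subset le_rfl
  rw [Set.union_sdiff_distrib, (hd.symm.mono_right hD).sdiff_eq_left,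
    alphaOn_union_of_separated hd hs, alphaOn_union_of_separated hd' hs',
    critOn_union_iff_of_separated hd' hs' fun h => hr h.1]
  exact ⟨by omega, (critOn_union_iff_of_separated hd hs hr).1 hc⟩

theorem alphaOn_insert_union_eq_and_critOn (hd : Disjoint E R) (hs : G.Separated E R)
    (hxy : G.Adj x y) (hcR : critOn G R r)
    (hK : alphaOn G (E \ {y}) + alphaOn G (R \ G.neighborSet x) + 2 ≤
      alphaOn G E + alphaOn G R) :
    alphaOn G (insert x (E ∪ R)) = alphaOn G E + alphaOn G R ∧
      critOn G (insert x (E ∪ R)) r := by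
  have hN : ∀ {Y : Set V}, Y ⊆ insert x (E ∪ R) →
      alphaOn G (Y \ insert x (G.neighborSet x)) ≤
        alphaOn G (E \ {y}) + alphaOn G (R \ G.neighborSet x) := by
    intro Y hY
    refine (alphaOn_mono fun z hz => ?_).trans (alphaOn_union_le _ _)
    rcases hY hz.1 with rfl | hzE | hzR
    · exact absurd (Set.mem_insert _ _) hz.2
    · exact .inl ⟨hzE, by rintro rfl; exact hz.2 (.inr hxy)⟩
    · exact .inr ⟨hzR, fun h => hz.2 (.inr h)⟩
  have h₁ := alphaOn_le_max_closedNbhd (G := G) (insert x (E ∪ R)) x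
  have h₂ : alphaOn G (insert x (E ∪ R) \ {x}) ≤ alphaOn G (E ∪ R) :=
    alphaOn_mono fun z hz => hz.1.resolve_left hz.2
  have h₃ := alphaOn_le_max_closedNbhd (G := G) (insert x (E ∪ R) \ {r}) x
  have h₄ : alphaOn G ((insert x (E ∪ R) \ {r}) \ {x}) ≤ alphaOn G (E ∪ (R \ {r})) :=
    alphaOn_mono fun z hz => (hz.1.1.resolve_left hz.2).imp_right fun hzR => ⟨hzR, hz.1.2⟩
  have h₅ : alphaOn G (E ∪ R) ≤ alphaOn G (insert x (E ∪ R)) :=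
    alphaOn_mono (Set.subset_insert _ _)
  have hN₁ := hN le_rfl
  have hN₂ := hN (Y := insert x (E ∪ R) \ {r}) Set.sdiff_subset
  have hER := alphaOn_union_of_separated hd hs
  have hEr := alphaOn_union_le (G := G) E (R \ {r})
  have hRr := critOn_iff_lt.1 hcR
  exact ⟨by omega, critOn_iff_lt.2 (by omega)⟩

theorem alphaOn_insert_union_of_critOn (hd : Disjoint E R) (hs : G.Separated E R) (hxE : x ∉ E)
    (hxR : x ∉ R) (hrx : G.Adj r x) (hc : critOn G (insert x (E ∪ R)) r) :
    alphaOn G (insert x (E ∪ R)) = alphaOn G E + alphaOn G R := by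
  rw [← hc.alphaOn_sdiff_singleton_of_adj hrx, Set.insert_sdiff_of_mem _ (Set.mem_singleton x),
    Set.sdiff_singleton_eq_self fun h => h.elim hxE hxR, alphaOn_union_of_separated hd hs]

theorem critOn_of_critOn_insert_union (hd : Disjoint E R) (hs : G.Separated E R) (hxE : x ∉ E)
    (hxR : x ∉ R) (hrx : G.Adj r x) (hr : r ∈ R) (hc : critOn G (insert x (E ∪ R)) r) :
    critOn G R r := by
  have hrE : r ∉ E := Set.disjoint_right.1 hd hr
  have h : alphaOn G (E ∪ (R \ {r})) ≤ alphaOn G (insert x (E ∪ R) \ {r}) :=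
    alphaOn_mono fun z hz => hz.elim (fun hzE => ⟨.inr (.inl hzE), fun h => hrE (h ▸ hzE)⟩)
      fun hzR => ⟨.inr (.inr hzR.1), hzR.2⟩
  rw [alphaOn_union_of_separated (hd.mono_right Set.sdiff_subset)
    (hs.mono le_rfl Set.sdiff_subset)] at h
  have := alphaOn_insert_union_of_critOn hd hs hxE hxR hrx hc
  have := critOn_iff_lt.1 hc
  exact critOn_iff_lt.2 (by omega)

/-- If `y` were not critical, adding `x` to `(E - y) ∪ (R - N(x))` would give an independent set
of `A - r` of size `α(A)`. -/
theorem critOn_of_pendant (hd : Disjoint E R) (hs : G.Separated E R) (hxE : x ∉ E)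
    (hxR : x ∉ R) (hy : ∀ e ∈ E, G.Adj x e → e = y) (hrx : G.Adj r x) (hr : r ∈ R)
    (hc : critOn G (insert x (E ∪ R)) r)
    (hR : alphaOn G R ≤ alphaOn G (R \ G.neighborSet x) + 1) : critOn G E y := by
  have hrE : r ∉ E := Set.disjoint_right.1 hd hr
  have hins : alphaOn G ((E \ {y}) ∪ (R \ G.neighborSet x)) + 1 ≤
      alphaOn G (insert x (E ∪ R) \ {r}) := by
    refine alphaOn_add_one_le_of_forall_not_adj ⟨Set.mem_insert _ _, hrx.ne'⟩ ?_ ?_ ?_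
    · rintro z (hz | hz)
      · exact ⟨.inr (.inl hz.1), fun h => hrE (h ▸ hz.1)⟩
      · exact ⟨.inr (.inr hz.1), by rintro rfl; exact hz.2 hrx.symm⟩
    · rintro (h | h)
      · exact hxE h.1
      · exact hxR h.1
    · rintro b (hb | hb) hxb
      · exact hb.2 (hy b hb.1 hxb)
      · exact hb.2 hxb
  rw [alphaOn_union_of_separated (hd.mono Set.sdiff_subset Set.sdiff_subset)
    (hs.mono Set.sdiff_subset Set.sdiff_subset)] at hins
  have := alphaOn_insert_union_of_critOn hd hs hxE hxR hrx hc
  have := critOn_iff_lt.1 hc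
  exact critOn_iff_lt.2 (by omega)

theorem exists_pair_of_pendant (hd : Disjoint E R) (hs : G.Separated E R) (hxE : x ∉ E)
    (hxR : x ∉ R) (hxy : G.Adj x y) (hy : ∀ e ∈ E, G.Adj x e → e = y) (hrx : G.Adj r x)
    (hr : r ∈ R) (hc : critOn G (insert x (E ∪ R)) r) (hRE : RootedPairReduction G E)
    (hME : PairReduction G E) (hZ : alphaOn G (E \ Z) < alphaOn G E)
    (hZ1 : ∀ z ∈ Z, alphaOn G (E \ {z}) = alphaOn G E) :
    ∃ u ∈ Z, ∃ v ∈ Z,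
      alphaOn G (insert x (E ∪ R) \ {u, v}) < alphaOn G (insert x (E ∪ R)) ∧
        critOn G (insert x (E ∪ R) \ {u, v}) r := by
  have hcR := critOn_of_critOn_insert_union hd hs hxE hxR hrx hr hc
  obtain ⟨u, hu, v, hv, hlt, hK⟩ : ∃ u ∈ Z, ∃ v ∈ Z,
      alphaOn G (E \ {u, v}) < alphaOn G E ∧
      alphaOn G ((E \ {u, v}) \ {y}) + alphaOn G (R \ G.neighborSet x) + 2 ≤
        alphaOn G (E \ {u, v}) + alphaOn G R := by
    by_cases hR : alphaOn G (R \ G.neighborSet x) + 2 ≤ alphaOn G R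
    · obtain ⟨u, hu, v, hv, hlt⟩ := hME Z hZ hZ1
      have := alphaOn_mono (G := G) (Set.sdiff_subset : (E \ {u, v}) \ {y} ⊆ E \ {u, v})
      exact ⟨u, hu, v, hv, hlt, by omega⟩
    have hRN : alphaOn G (R \ G.neighborSet x) ≤ alphaOn G (R \ {r}) :=
      alphaOn_mono (Set.sdiff_subset_sdiff_right (by simpa using hrx.symm))
    have hRr := critOn_iff_lt.1 hcR
    rcases hRE y Z (critOn_of_pendant hd hs hxE hxR hy hrx hr hc (by omega)) hZ with
      ⟨u, hu, v, hv, hlt, hcrit⟩ | ⟨u, hu, hlt, -⟩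
    · unfold critOn at hcrit
      exact ⟨u, hu, v, hv, hlt, by omega⟩
    · exact absurd (hZ1 u hu) hlt.ne
  have huv := pair_subset_of_alphaOn_sdiff_pair_lt hlt fun z hz => by
    rcases hz with rfl | rfl
    exacts [hZ1 _ hu, hZ1 _ hv]
  obtain ⟨heq, hcrit⟩ := alphaOn_insert_union_eq_and_critOn (hd.mono_left Set.sdiff_subset)
    (hs.mono Set.sdiff_subset le_rfl) hxy hcR hK
  have hA := alphaOn_insert_union_of_critOn hd hs hxE hxR hrx hc
  refine ⟨u, hu, v, hv, ?_⟩
  rw [Set.insert_sdiff_of_notMem _ fun h => hxE (huv h), Set.union_sdiff_distrib,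
    (hd.symm.mono_right huv).sdiff_eq_left]
  exact ⟨by omega, hcrit⟩

theorem critOn.exists_componentIn_sdiff_closedNbhd (hc : critOn G A r) (hrZ : r ∉ Z)
    (hZ : alphaOn G (A \ Z) < alphaOn G A) (hZ1 : ∀ z ∈ Z, alphaOn G (A \ {z}) = alphaOn G A) :
    ∃ w, alphaOn G (G.componentIn (A \ insert r (G.neighborSet r)) w \ Z) <
        alphaOn G (G.componentIn (A \ insert r (G.neighborSet r)) w) ∧
      ∀ z ∈ Z, alphaOn G (G.componentIn (A \ insert r (G.neighborSet r)) w \ {z}) =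
        alphaOn G (G.componentIn (A \ insert r (G.neighborSet r)) w) := by
  set B := A \ insert r (G.neighborSet r)
  have hBZ : alphaOn G (B \ Z) < alphaOn G B := by
    have := alphaOn_add_one_le_of_forall_not_adj (G := G) (A := A \ Z) (B := B \ Z)
      ⟨hc.mem, hrZ⟩ (Set.sdiff_subset_sdiff_left Set.sdiff_subset)
      (fun h => h.1.2 (Set.mem_insert r _)) fun b hb hadj => hb.1.2 (Set.mem_insert_of_mem r hadj)
    have : alphaOn G B + 1 = alphaOn G A := hc.alphaOn_sdiff_closedNbhd_add_one
    omega
  obtain ⟨w, -, hEZ⟩ := exists_componentIn_alphaOn_sdiff_lt Z hBZ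
  refine ⟨w, hEZ, fun z hz => ?_⟩
  refine alphaOn_sdiff_eq_left_of_separated Set.disjoint_sdiff_right (componentIn_separated B w) ?_
  rw [Set.union_sdiff_cancel componentIn_subset]
  exact hc.alphaOn_sdiff_closedNbhd_sdiff_singleton (hZ1 z hz)

theorem exists_pair_of_critOn (hG : G.IsAcyclic) (hc : critOn G A r) (hrZ : r ∉ Z)
    (hZ : alphaOn G (A \ Z) < alphaOn G A) (hZ1 : ∀ z ∈ Z, alphaOn G (A \ {z}) = alphaOn G A)
    (ih : ∀ E : Set V, E.ncard < A.ncard → RootedPairReduction G E ∧ PairReduction G E) :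
    ∃ u ∈ Z, ∃ v ∈ Z, alphaOn G (A \ {u, v}) < alphaOn G A ∧ critOn G (A \ {u, v}) r := by
  obtain ⟨w, hEZ, hEZ1⟩ := hc.exists_componentIn_sdiff_closedNbhd hrZ hZ hZ1
  set E := G.componentIn (A \ insert r (G.neighborSet r)) w
  have hEB : E ⊆ A \ insert r (G.neighborSet r) := componentIn_subset
  have hEA : E ⊆ A := hEB.trans Set.sdiff_subset
  have hrE : r ∉ E := fun h => (hEB h).2 (.inl rfl)
  obtain ⟨hRE, hME⟩ :=
    ih E (Set.ncard_lt_ncard (hEA.ssubset_of_not_subset fun h => hrE (h hc.mem)))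
  by_cases hx : ∃ x ∈ A, G.Adj r x ∧ ∃ y ∈ E, G.Adj x y
  · obtain ⟨x, hxA, hrx, y, hyE, hxy⟩ := hx
    have hxE : x ∉ E := fun h => (hEB h).2 (.inr hrx)
    have hy : ∀ e ∈ E, G.Adj x e → e = y := fun e he hxe =>
      hG.eq_of_adj_of_mem_componentIn (fun h => h.2 (.inr hrx)) he hyE hxe hxy
    have hs : G.Separated E ((A \ E) \ {x}) := fun e he c hc hec =>
      hc.2 <| hG.eq_of_adj_of_adj_mem_componentIn (fun h => h.2 (Set.mem_insert r _)) hyE he hrx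
        (adj_of_adj_componentIn_sdiff_closedNbhd he hc.1.1 hc.1.2 hec) hxy hec.symm
    have hr : r ∈ (A \ E) \ {x} := ⟨⟨hc.mem, hrE⟩, hrx.ne⟩
    rw [← insert_union_sdiff_sdiff_singleton hxA hEA] at hc ⊢
    exact exists_pair_of_pendant (Set.disjoint_sdiff_right.mono_right Set.sdiff_subset) hs hxE
      (fun h => h.2 rfl) hxy hy hrx hr hc hRE hME hEZ hEZ1
  · push Not at hx
    have hs : G.Separated E (A \ E) := fun e he c hc hec =>
      hx c hc.1 (adj_of_adj_componentIn_sdiff_closedNbhd he hc.1 hc.2 hec) e he hec.symm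
    obtain ⟨u, hu, v, hv, hlt⟩ := hME Z hEZ hEZ1
    have huv := pair_subset_of_alphaOn_sdiff_pair_lt hlt fun z hz => by
      rcases hz with rfl | rfl
      exacts [hEZ1 _ hu, hEZ1 _ hv]
    rw [← Set.union_sdiff_cancel hEA] at hc ⊢
    exact ⟨u, hu, v, hv,
      alphaOn_union_sdiff_lt_and_critOn Set.disjoint_sdiff_right hs hrE hc huv hlt⟩

theorem rootedPairReduction_of_lt (hG : G.IsAcyclic) (A : Set V)
    (ih : ∀ E : Set V, E.ncard < A.ncard → RootedPairReduction G E ∧ PairReduction G E) :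
    RootedPairReduction G A := by
  intro r Z hc hZ
  by_cases hrZ : r ∈ Z
  · exact .inr ⟨r, hrZ, critOn_iff_lt.1 hc, not_critOn_sdiff_singleton⟩
  by_cases hsingle : ∃ z ∈ Z, alphaOn G (A \ {z}) < alphaOn G A
  · obtain ⟨z, hz, hlt⟩ := hsingle
    by_cases hcz : critOn G (A \ {z}) r
    · exact .inl ⟨z, hz, z, hz, by rwa [Set.pair_eq_singleton], by rwa [Set.pair_eq_singleton]⟩
    · exact .inr ⟨z, hz, hlt, hcz⟩
  push Not at hsingle
  exact .inl (exists_pair_of_critOn hG hc hrZ hZ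
    (fun z hz => le_antisymm (alphaOn_mono Set.sdiff_subset) (hsingle z hz)) ih)

theorem rootedPairReduction_and_pairReduction (hG : G.IsAcyclic) (A : Set V) :
    RootedPairReduction G A ∧ PairReduction G A :=
  have ih (E : Set V) (_ : E.ncard < A.ncard) : RootedPairReduction G E ∧ PairReduction G E :=
    rootedPairReduction_and_pairReduction hG E
  have hR := rootedPairReduction_of_lt hG A ih
  ⟨hR, pairReduction_of_lt hG A hR ih⟩
termination_by A.ncard

end

theorem stmt8 {V : Type*} [Fintype V] (T : SimpleGraph V) (hT : T.IsTree) (r : V) (Z : Set V)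
    (h : alphaOn T Zᶜ < alphaOn T Set.univ) (hc : critOn T Set.univ r) :
    (∃ u ∈ Z, ∃ v ∈ Z, alphaOn T ({u, v} : Set V)ᶜ < alphaOn T Set.univ ∧
        critOn T ({u, v} : Set V)ᶜ r) ∨
    (∃ u ∈ Z, alphaOn T ({u} : Set V)ᶜ < alphaOn T Set.univ ∧
        ¬ critOn T ({u} : Set V)ᶜ r) := by
  rw [Set.compl_eq_univ_sdiff] at h
  simpa only [Set.compl_eq_univ_sdiff] using
    (rootedPairReduction_and_pairReduction hT.isAcyclic Set.univ).1 r Z hc h
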